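/- arXiv:1109.4157 — 6 statements merged into one kernel-verified Lean document; each statement's English description precedes it below -/
import Mathlib

section
/- Let S be a finite poset, R a subset of S, and let S_R = R ∪ â(S∖R) be the subposet of â(S) consisting of the singleton antichains of elements of R together with all nonempty antichains of S∖R. If R is a filter of S, then R is a filter of S_R. -/
/-- The order on antichains: `A ≤ B` iff every element of `B` lies above some element of `A`. -/
def aLe {S : Type*} [PartialOrder S] (A B : Set S) : Prop :=
  ∀ b ∈ B, ∃ a ∈ A, a ≤ b

/-- Membership in the poset `S_R = R ∪ â(S∖R)`: either a singleton antichain of an element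
of `R`, or a nonempty antichain of `S∖R`. -/
def memSR {S : Type*} [PartialOrder S] (R : Set S) (A : Set S) : Prop :=
  (∃ r ∈ R, A = {r}) ∨ (A.Nonempty ∧ IsAntichain (· ≤ ·) A ∧ A ⊆ Rᶜ)

/-- If `R` is a filter of a finite poset `S`, then `R` (as singletons) is a
filter of the poset `S_R = R ∪ â(S∖R)` with the antichain order. -/
theorem stmt6 {S : Type*} [PartialOrder S] [Fintype S] (R : Set S) (hR : IsUpperSet R) :
    ∀ x ∈ R, ∀ B : Set S, memSR R B → aLe ({x} : Set S) B → ∃ r ∈ R, B = {r} := by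
  intro x hx B hB hle
  rcases hB with h | ⟨⟨b, hb⟩, _, hsub⟩
  · exact h
  · obtain ⟨a, ha, hab⟩ := hle b hb
    rw [Set.mem_singleton_iff] at ha
    subst ha
    exact absurd (hR hab hx) (hsub hb)
end

section
/- Let S be a finite poset, R ⊆ S, and consider the restriction functor res^S_R (forgetting subspaces at S∖R), the induction functor ind^S_R sending (V, V(r))_{r∈R} to (V, Σ_{r∈R, r≤s} V(r))_{s∈S}, and the coinduction functor coind^S_R sending it to (V, ∩_{r∈R, s≤r} V(r))_{s∈S}. Then ind^S_R is left adjoint to res^S_R, and coind^S_R is right adjoint to res^S_R. -/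
/-!
Both bijections are the identity on underlying linear maps, so naturality holds
definitionally. The content is that `ind^S_R V` is the smallest monotone extension of `V` to `S` and
`coind^S_R V` the largest: a linear map `φ` sends `Σ_{r ≤ s} V(r)` into `W(s)` for all `s`
exactly when it sends each `V(r)` into `W(r)`, by monotonicity of `W`; dually for intersections.
-/

/-- An `S`-space over a field `k`: a finite-dimensional `k`-vector space together with a
monotone family of subspaces indexed by the poset `S`. -/
structure PSp (k : Type) [Field k] (S : Type) [Preorder S] where
  carrier : Type
  [acg : AddCommGroup carrier]
  [mod : Module k carrier]
  [fin : FiniteDimensional k carrier]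
  sub : S → Submodule k carrier
  mono : ∀ {s t : S}, s ≤ t → sub s ≤ sub t

attribute [instance] PSp.acg PSp.mod PSp.fin

variable {k : Type} [Field k] {S : Type} [PartialOrder S] [Fintype S]

/-- A morphism of `S`-spaces: a `k`-linear map respecting the distinguished subspaces. -/
@[ext]
structure PHom (U V : PSp k S) where
  toLinearMap : U.carrier →ₗ[k] V.carrier
  maps : ∀ s : S, ∀ x ∈ U.sub s, toLinearMap x ∈ V.sub s

/-- Composition of morphisms of `S`-spaces. -/
def PHom.comp {U V W : PSp k S} (g : PHom V W) (f : PHom U V) : PHom U W :=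
  ⟨g.toLinearMap ∘ₗ f.toLinearMap, fun s x hx => g.maps s _ (f.maps s x hx)⟩

/-- The identity morphism of an `S`-space. -/
def PHom.id (U : PSp k S) : PHom U U := ⟨LinearMap.id, fun _ _ hx => hx⟩

/-- A morphism `f : U → V` of `S`-spaces is proper if `f(U(s)) = V(s) ∩ im f` for all `s`. -/
def PHom.Proper {U V : PSp k S} (f : PHom U V) : Prop :=
  ∀ s : S, (U.sub s).map f.toLinearMap = V.sub s ⊓ LinearMap.range f.toLinearMap

/-- The restriction functor `res^S_R` on objects. -/
def resS (R : Set S) (V : PSp k S) : PSp k ↥R where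
  carrier := V.carrier
  sub r := V.sub ↑r
  mono h := V.mono h

/-- The induction functor `ind^S_R` on objects: `X(s) = Σ_{r ∈ R, r ≤ s} V(r)`. -/
def indS (R : Set S) (V : PSp k ↥R) : PSp k S where
  carrier := V.carrier
  sub s := ⨆ (r : R) (_ : (r : S) ≤ s), V.sub r
  mono := by
    intro s t h
    refine iSup_mono fun r => ?_
    exact iSup_le fun hr => le_iSup_of_le (hr.trans h) le_rfl

/-- The coinduction functor `coind^S_R` on objects: `X(s) = ∩_{r ∈ R, s ≤ r} V(r)`. -/
def coindS (R : Set S) (V : PSp k ↥R) : PSp k S where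
  carrier := V.carrier
  sub s := ⨅ (r : R) (_ : s ≤ (r : S)), V.sub r
  mono := by
    intro s t h
    refine le_iInf fun r => le_iInf fun hr => ?_
    exact iInf_le_of_le r (iInf_le_of_le (h.trans hr) le_rfl)

/-- The restriction functor on morphisms. -/
def resHom (R : Set S) {V W : PSp k S} (f : PHom V W) : PHom (resS R V) (resS R W) :=
  ⟨f.toLinearMap, fun r x hx => f.maps ↑r x hx⟩

/-- The induction functor on morphisms. -/
def indHom (R : Set S) {V W : PSp k ↥R} (f : PHom V W) : PHom (indS R V) (indS R W) := by
  refine ⟨f.toLinearMap, fun s x hx => ?_⟩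
  have h1 : Submodule.map f.toLinearMap ((indS R V).sub s) ≤ (indS R W).sub s := by
    show Submodule.map f.toLinearMap (⨆ (r : R) (_ : (r : S) ≤ s), V.sub r) ≤ _
    rw [Submodule.map_iSup]
    refine iSup_mono fun r => ?_
    rw [Submodule.map_iSup]
    refine iSup_mono fun hr => ?_
    exact Submodule.map_le_iff_le_comap.mpr fun y hy => Submodule.mem_comap.mpr (f.maps r y hy)
  exact h1 (Submodule.mem_map_of_mem hx)

/-- The coinduction functor on morphisms. -/
def coindHom (R : Set S) {V W : PSp k ↥R} (f : PHom V W) : PHom (coindS R V) (coindS R W) := by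
  refine ⟨f.toLinearMap, fun s (x : V.carrier) hx => ?_⟩
  have hx' : x ∈ ⨅ (r : R) (_ : s ≤ (r : S)), V.sub r := hx
  have key : ∀ r : R, s ≤ (r : S) → x ∈ V.sub r := fun r hr => by
    rw [Submodule.mem_iInf] at hx'
    have := hx' r
    rw [Submodule.mem_iInf] at this
    exact this hr
  show f.toLinearMap x ∈ ⨅ (r : R) (_ : s ≤ (r : S)), W.sub r
  rw [Submodule.mem_iInf]
  intro r
  rw [Submodule.mem_iInf]
  intro hr
  exact f.maps r x (key r hr)

section Adjunction

variable {k : Type} [Field k] {S : Type} [PartialOrder S] (R : Set S)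

theorem sub_le_indS_sub (V : PSp k R) (r : R) : V.sub r ≤ (indS R V).sub r :=
  le_iSup₂_of_le r le_rfl le_rfl

theorem coindS_sub_le_sub (V : PSp k R) (r : R) : (coindS R V).sub r ≤ V.sub r :=
  iInf₂_le_of_le r le_rfl le_rfl

theorem indS_sub_le_comap_iff (V : PSp k R) (W : PSp k S) (φ : V.carrier →ₗ[k] W.carrier) :
    (∀ s, (indS R V).sub s ≤ (W.sub s).comap φ) ↔ ∀ r : R, V.sub r ≤ (W.sub r).comap φ :=
  ⟨fun h r => (sub_le_indS_sub R V r).trans (h r),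
    fun h _ => iSup₂_le fun r hr => (h r).trans (Submodule.comap_mono (W.mono hr))⟩

theorem sub_le_comap_coindS_iff (W : PSp k S) (V : PSp k R) (φ : W.carrier →ₗ[k] V.carrier) :
    (∀ s, W.sub s ≤ ((coindS R V).sub s).comap φ) ↔ ∀ r : R, W.sub r ≤ (V.sub r).comap φ :=
  ⟨fun h r => (h r).trans (Submodule.comap_mono (coindS_sub_le_sub R V r)),
    fun h s => by
      simp only [coindS, Submodule.comap_iInf]
      exact le_iInf₂ fun r hr => (W.mono hr).trans (h r)⟩

def indResEquiv (V : PSp k R) (W : PSp k S) : PHom (indS R V) W ≃ PHom V (resS R W) where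
  toFun h := ⟨h.toLinearMap, (indS_sub_le_comap_iff R V W _).1 h.maps⟩
  invFun h := ⟨h.toLinearMap, (indS_sub_le_comap_iff R V W _).2 h.maps⟩
  left_inv _ := rfl
  right_inv _ := rfl

def resCoindEquiv (W : PSp k S) (V : PSp k R) : PHom (resS R W) V ≃ PHom W (coindS R V) where
  toFun h := ⟨h.toLinearMap, (sub_le_comap_coindS_iff R W V _).2 h.maps⟩
  invFun h := ⟨h.toLinearMap, (sub_le_comap_coindS_iff R W V _).1 h.maps⟩
  left_inv _ := rfl
  right_inv _ := rfl

end Adjunction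

/-- `ind^S_R` is left adjoint to `res^S_R`, and `coind^S_R` is right adjoint
to `res^S_R`: there are bijections of Hom-sets natural in both variables. -/
theorem stmt10 (R : Set S) :
    (∃ e : ∀ (V : PSp k ↥R) (W : PSp k S), PHom (indS R V) W ≃ PHom V (resS R W),
      ∀ (V V' : PSp k ↥R) (W W' : PSp k S) (f : PHom V' V) (g : PHom W W')
        (h : PHom (indS R V) W),
        e V' W' ((g.comp h).comp (indHom R f)) = ((resHom R g).comp (e V W h)).comp f) ∧
    (∃ e : ∀ (W : PSp k S) (V : PSp k ↥R), PHom (resS R W) V ≃ PHom W (coindS R V),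
      ∀ (W W' : PSp k S) (V V' : PSp k ↥R) (g : PHom W' W) (f : PHom V V')
        (h : PHom (resS R W) V),
        e W' V' ((f.comp h).comp (resHom R g)) = ((coindHom R f).comp (e W V h)).comp g) :=
  ⟨⟨indResEquiv R, fun _ _ _ _ _ _ _ => rfl⟩, ⟨resCoindEquiv R, fun _ _ _ _ _ _ _ => rfl⟩⟩
end

section
/- Let S be a finite poset and T ⊆ S. For the poset S_{S∖T} = (S∖T) ∪ â(T), one has the equality of functors res^{S_{S∖T}}_{â(T)} ∘ coind^{S_{S∖T}}_S = coind^{â(T)}_T ∘ res^S_T from S-spaces to â(T)-spaces. Concretely, for an S-space V and any nonempty antichain A = {a_1,…,a_m} of T, both sides assign the subspace V(a_1) ∩ … ∩ V(a_m). -/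
variable {k : Type} [Field k] {S : Type} [PartialOrder S] [Fintype S]

/-- Restriction of a `Q`-space along a monotone map `ι : P → Q` of posets. -/
def resA {P Q : Type} [Preorder P] [Preorder Q] (ι : P → Q) (hι : Monotone ι)
    (V : PSp k Q) : PSp k P where
  carrier := V.carrier
  sub p := V.sub (ι p)
  mono h := V.mono (hι h)

/-- Coinduction of a `P`-space along a map `ι : P → Q`:
`X(q) = ∩_{p, q ≤ ι p} V(p)`. -/
def coindA {P Q : Type} [Preorder P] [Preorder Q] (ι : P → Q) (V : PSp k P) :
    PSp k Q where
  carrier := V.carrier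
  sub q := ⨅ (p : P) (_ : q ≤ ι p), V.sub p
  mono := by
    intro s t h
    refine le_iInf fun p => le_iInf fun hp => ?_
    exact iInf_le_of_le p (iInf_le_of_le (h.trans hp) le_rfl)

/-- The antichain order: `A ≤ B` iff every element of `B` lies above some element of `A`. -/
def ALe {α : Type} [Preorder α] (A B : Set α) : Prop := ∀ b ∈ B, ∃ a ∈ A, a ≤ b

lemma ALe_antisymm {α : Type} [PartialOrder α] {A B : Set α}
    (hA : IsAntichain (· ≤ ·) A) (hB : IsAntichain (· ≤ ·) B)
    (h1 : ALe A B) (h2 : ALe B A) : A = B := by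
  have key : ∀ {X Y : Set α}, IsAntichain (· ≤ ·) X → ALe X Y → ALe Y X → X ⊆ Y := by
    intro X Y hX hXY hYX x hx
    obtain ⟨y, hy, hyx⟩ := hYX x hx
    obtain ⟨x', hx', hx'y⟩ := hXY y hy
    have hxx : x' ≤ x := hx'y.trans hyx
    have hxe : x' = x := by
      by_contra hne
      exact hX hx' hx hne hxx
    subst hxe
    have : x' = y := le_antisymm hx'y hyx
    exact this ▸ hy
  exact Set.Subset.antisymm (key hA h1 h2) (key hB h2 h1)

variable {α : Type} [PartialOrder α] [Fintype α]

/-- The poset `â(T)` of nonempty antichains of `T`. -/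
def AntiT (T : Set α) : Type := {A : Set α // A.Nonempty ∧ IsAntichain (· ≤ ·) A ∧ A ⊆ T}

/-- The poset `S_{S∖T} = (S∖T) ∪ â(T)`. -/
def SST (T : Set α) : Type :=
  {A : Set α // (∃ s ∉ T, A = {s}) ∨ (A.Nonempty ∧ IsAntichain (· ≤ ·) A ∧ A ⊆ T)}

instance (T : Set α) : PartialOrder (AntiT T) where
  le A B := ALe A.1 B.1
  le_refl A b hb := ⟨b, hb, le_rfl⟩
  le_trans A B C h1 h2 c hc := by
    obtain ⟨b, hb, hbc⟩ := h2 c hc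
    obtain ⟨a, ha, hab⟩ := h1 b hb
    exact ⟨a, ha, hab.trans hbc⟩
  le_antisymm A B h1 h2 := Subtype.ext (ALe_antisymm A.2.2.1 B.2.2.1 h1 h2)

lemma SST_antichain {T : Set α} (A : SST T) : IsAntichain (· ≤ ·) A.1 := by
  rcases A.2 with ⟨s, _, hs⟩ | ⟨_, h, _⟩
  · rw [hs]; exact Set.subsingleton_singleton.isAntichain _
  · exact h

instance (T : Set α) : PartialOrder (SST T) where
  le A B := ALe A.1 B.1
  le_refl A b hb := ⟨b, hb, le_rfl⟩
  le_trans A B C h1 h2 c hc := by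
    obtain ⟨b, hb, hbc⟩ := h2 c hc
    obtain ⟨a, ha, hab⟩ := h1 b hb
    exact ⟨a, ha, hab.trans hbc⟩
  le_antisymm A B h1 h2 :=
    Subtype.ext (ALe_antisymm (SST_antichain A) (SST_antichain B) h1 h2)

/-- The embedding of `S` into `S_{S∖T}` by singleton antichains. -/
noncomputable def sstOf (T : Set α) (s : α) : SST T :=
  ⟨{s}, by
    by_cases h : s ∈ T
    · exact Or.inr ⟨⟨s, rfl⟩, Set.subsingleton_singleton.isAntichain _,
        Set.singleton_subset_iff.mpr h⟩
    · exact Or.inl ⟨s, h, rfl⟩⟩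

lemma sstOf_mono (T : Set α) : Monotone (sstOf T) := by
  intro s t h b hb
  rw [show (sstOf T t).1 = {t} from rfl, Set.mem_singleton_iff] at hb
  exact ⟨s, rfl, hb ▸ h⟩

/-- The inclusion of `â(T)` into `S_{S∖T}`. -/
noncomputable def sstOfAnti (T : Set α) (A : AntiT T) : SST T := ⟨A.1, Or.inr A.2⟩

lemma sstOfAnti_mono (T : Set α) : Monotone (sstOfAnti T) := fun _ _ h => h

/-- The embedding of `T` into `â(T)` by singleton antichains. -/
noncomputable def antiOf (T : Set α) (t : ↥T) : AntiT T :=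
  ⟨{(t : α)}, ⟨(t : α), rfl⟩, Set.subsingleton_singleton.isAntichain _,
    Set.singleton_subset_iff.mpr t.2⟩

lemma val_mono (T : Set α) : Monotone (Subtype.val : ↥T → α) := fun _ _ h => h

/-!
Both composites keep the underlying space of `V`. On either side the subspace at an antichain `A`
is the intersection of the `V(s)` over the `s` (in `S`, respectively in `T`) lying above some
element of `A`; since `V` is monotone, this intersection is already attained over `A ⊆ T`.
-/

lemma PSp.sub_monotone {P : Type} [Preorder P] {K : Type} [Field K] (V : PSp K P) :
    Monotone V.sub :=
  fun _ _ h => V.mono h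

theorem Monotone.iInf_exists_le_comp_eq {ι P β : Type} [Preorder P] [CompleteLattice β]
    {f : P → β} (hf : Monotone f) (g : ι → P) {A : Set P} (hA : A ⊆ Set.range g) :
    ⨅ (i : ι) (_ : ∃ a ∈ A, a ≤ g i), f (g i) = ⨅ a ∈ A, f a := by
  apply le_antisymm
  · refine le_iInf₂ fun a ha => ?_
    obtain ⟨i, rfl⟩ := hA ha
    exact iInf₂_le_of_le i ⟨g i, ha, le_rfl⟩ le_rfl
  · refine le_iInf₂ fun i ⟨a, ha, hai⟩ => ?_
    exact iInf₂_le_of_le a ha (hf hai)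

lemma ALe_singleton_iff {P : Type} [Preorder P] {A : Set P} {s : P} :
    ALe A {s} ↔ ∃ a ∈ A, a ≤ s :=
  ⟨fun h => h s rfl, fun ⟨a, ha, has⟩ _ hb => ⟨a, ha, hb ▸ has⟩⟩

lemma le_antiOf_iff {P : Type} [PartialOrder P] {T : Set P} {A : AntiT T} {t : ↥T} :
    A ≤ antiOf T t ↔ ∃ a ∈ A.1, a ≤ (t : P) :=
  ALe_singleton_iff

section Antichains

variable {T : Set α}

lemma sstOfAnti_le_sstOf_iff {A : AntiT T} {s : α} :
    sstOfAnti T A ≤ sstOf T s ↔ ∃ a ∈ A.1, a ≤ s :=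
  ALe_singleton_iff

variable (V : PSp k α)

lemma resA_coindA_sstOf_sub (A : AntiT T) :
    (resA (sstOfAnti T) (sstOfAnti_mono T) (coindA (sstOf T) V)).sub A = ⨅ a ∈ A.1, V.sub a := by
  simp only [resA, coindA, sstOfAnti_le_sstOf_iff]
  exact V.sub_monotone.iInf_exists_le_comp_eq id (by simp)

lemma coindA_antiOf_resA_sub (A : AntiT T) :
    (coindA (antiOf T) (resA (Subtype.val : ↥T → α) (val_mono T) V)).sub A =
      ⨅ a ∈ A.1, V.sub a := by
  simp only [resA, coindA, le_antiOf_iff]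
  exact V.sub_monotone.iInf_exists_le_comp_eq Subtype.val (by simpa using A.2.2.2)

end Antichains

/-- `res^{S_{S∖T}}_{â(T)} ∘ coind^{S_{S∖T}}_S = coind^{â(T)}_T ∘ res^S_T` as
functors from `S`-spaces to `â(T)`-spaces; concretely, for an `S`-space `V` and a nonempty
antichain `A = {a_1,…,a_m}` of `T`, both sides assign the subspace `V(a_1) ∩ … ∩ V(a_m)`. -/
theorem stmt13 (T : Set α) (V : PSp k α) :
    resA (sstOfAnti T) (sstOfAnti_mono T) (coindA (sstOf T) V) =
      coindA (antiOf T) (resA (Subtype.val : ↥T → α) (val_mono T) V) ∧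
    ∀ A : AntiT T,
      (resA (sstOfAnti T) (sstOfAnti_mono T) (coindA (sstOf T) V)).sub A =
        ⨅ a ∈ A.1, V.sub a := by
  refine ⟨?_, resA_coindA_sstOf_sub V⟩
  unfold resA coindA
  congr 1
  exact funext fun A => (resA_coindA_sstOf_sub V A).trans (coindA_antiOf_resA_sub V A).symm
end

section
/- Let S be a finite poset and k a field. An S-space V is simple (every nonzero proper monomorphism into V is an isomorphism) if and only if its ambient space is one-dimensional. Moreover, the isomorphism classes of simple S-spaces are in bijection with the antichains of S: for each antichain A, the simple S-space k_A has ambient space k and k_A(s) = k if a ≤ s for some a ∈ A, and 0 otherwise, and k_A ≅ k_B implies A = B. -/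
variable {k : Type} [Field k] {S : Type} [PartialOrder S] [Fintype S]

open Classical in
/-- The `S`-space `k_A` associated to an antichain `A`: ambient space `k`, with subspace
`k` at `s` iff `a ≤ s` for some `a ∈ A`, and `0` otherwise. -/
noncomputable def kASp (k : Type) [Field k] {S : Type} [PartialOrder S] (A : Set S) :
    PSp k S where
  carrier := k
  sub s := if ∃ a ∈ A, a ≤ s then ⊤ else ⊥
  mono := by
    intro s t h
    try dsimp only
    by_cases hs : ∃ a ∈ A, a ≤ s
    · obtain ⟨a, ha, has⟩ := hs
      rw [if_pos ⟨a, ha, has⟩, if_pos ⟨a, ha, has.trans h⟩]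
    · rw [if_neg hs]
      exact bot_le

/-- Isomorphism of `S`-spaces. -/
def PIso {k : Type} [Field k] {S : Type} [PartialOrder S] (U V : PSp k S) : Prop :=
  ∃ (f : PHom U V) (g : PHom V U), f.comp g = PHom.id V ∧ g.comp f = PHom.id U

/-- A nonzero `S`-space is simple if every nonzero proper monomorphism into it is an
isomorphism. -/
def PSimple {k : Type} [Field k] {S : Type} [PartialOrder S] (V : PSp k S) : Prop :=
  (∃ x : V.carrier, x ≠ 0) ∧
  ∀ (U : PSp k S) (g : PHom U V), g.toLinearMap ≠ 0 → Function.Injective g.toLinearMap →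
    g.Proper → ∃ h : PHom V U, g.comp h = PHom.id V ∧ h.comp g = PHom.id U

/-!
Every subspace of a line is `0` or the whole line. Hence a nonzero monomorphism into a
one-dimensional `S`-space is bijective, and properness says exactly that its inverse respects the
subspaces. Conversely, the span of a nonzero vector of a simple `V`, with the induced subspaces,
is a proper subobject, so it is all of `V`.

A one-dimensional `S`-space is determined up to isomorphism by the up-set of those `s` with
`V(s) = V`. In a finite poset an up-set is generated by its minimal elements, and an antichain is
recovered from the up-set it generates as that set's minimal elements.
-/

section

omit [Fintype S]

variable {U V : PSp k S}

theorem PHom.apply_apply_of_comp_eq_id {f : PHom U V} {g : PHom V U} (h : f.comp g = PHom.id V)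
    (v : V.carrier) : f.toLinearMap (g.toLinearMap v) = v :=
  LinearMap.congr_fun (congrArg PHom.toLinearMap h) v

theorem PIso.symm (h : PIso U V) : PIso V U :=
  let ⟨f, g, hfg, hgf⟩ := h
  ⟨g, f, hgf, hfg⟩

theorem PIso.sub_eq_top_of_sub_eq_top (h : PIso U V) {s : S} (hU : U.sub s = ⊤) :
    V.sub s = ⊤ := by
  obtain ⟨f, g, hfg, -⟩ := h
  refine eq_top_iff.2 fun v _ => ?_
  rw [← PHom.apply_apply_of_comp_eq_id hfg v]
  exact f.maps s _ (hU ▸ Submodule.mem_top)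

theorem PIso.sub_eq_top_iff (h : PIso U V) (s : S) : U.sub s = ⊤ ↔ V.sub s = ⊤ :=
  ⟨h.sub_eq_top_of_sub_eq_top, h.symm.sub_eq_top_of_sub_eq_top⟩

theorem PHom.exists_inverse_of_bijective (g : PHom U V) (hg : Function.Bijective g.toLinearMap)
    (hsub : ∀ s, V.sub s ≤ (U.sub s).map g.toLinearMap) :
    ∃ h : PHom V U, g.comp h = PHom.id V ∧ h.comp g = PHom.id U := by
  let e := LinearEquiv.ofBijective g.toLinearMap hg
  refine ⟨⟨e.symm.toLinearMap, fun s v hv => ?_⟩, ?_, ?_⟩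
  · obtain ⟨u, hu, rfl⟩ := hsub s hv
    simpa [e] using hu
  · ext v
    exact e.apply_symm_apply v
  · ext u
    exact e.symm_apply_apply u

def PSp.restrict (V : PSp k S) (L : Submodule k V.carrier) : PSp k S where
  carrier := L
  sub s := (V.sub s).comap L.subtype
  mono h := Submodule.comap_mono (V.mono h)

def PHom.subtype (V : PSp k S) (L : Submodule k V.carrier) : PHom (V.restrict L) V :=
  ⟨L.subtype, fun _ _ hx => hx⟩

theorem PHom.subtype_proper (V : PSp k S) (L : Submodule k V.carrier) :
    (PHom.subtype V L).Proper := by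
  intro s
  change ((V.sub s).comap L.subtype).map L.subtype = V.sub s ⊓ LinearMap.range L.subtype
  rw [Submodule.map_comap_eq, Submodule.range_subtype, inf_comm]

theorem PSimple.finrank_eq_one (hV : PSimple V) : Module.finrank k V.carrier = 1 := by
  obtain ⟨⟨x, hx⟩, hsimple⟩ := hV
  set L := k ∙ x
  have hne : (PHom.subtype V L).toLinearMap ≠ 0 := fun h =>
    hx (LinearMap.congr_fun h ⟨x, Submodule.mem_span_singleton_self x⟩)
  obtain ⟨h, hgh, -⟩ :=
    hsimple _ _ hne L.injective_subtype (PHom.subtype_proper V L)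
  have hL : L = ⊤ := eq_top_iff.2 fun v _ => by
    rw [← PHom.apply_apply_of_comp_eq_id hgh v]
    exact (h.toLinearMap v).2
  rw [← finrank_top, ← hL, finrank_span_singleton hx]

theorem PSimple.of_finrank_eq_one (hV : Module.finrank k V.carrier = 1) : PSimple V := by
  have : IsSimpleModule k V.carrier := isSimpleModule_iff_finrank_eq_one.mpr hV
  have : Nontrivial V.carrier := Module.nontrivial_of_finrank_eq_succ hV
  refine ⟨exists_ne 0, fun U g hg hinj hproper => ?_⟩
  have hrange : LinearMap.range g.toLinearMap = ⊤ :=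
    (eq_bot_or_eq_top _).resolve_left (LinearMap.range_eq_bot.not.2 hg)
  refine g.exists_inverse_of_bijective ⟨hinj, LinearMap.range_eq_top.1 hrange⟩ fun s => ?_
  rw [hproper s, hrange, inf_top_eq]

theorem psimple_iff_finrank_eq_one : PSimple V ↔ Module.finrank k V.carrier = 1 :=
  ⟨PSimple.finrank_eq_one, PSimple.of_finrank_eq_one⟩

def PHom.ofFinrankEqOne (f : U.carrier →ₗ[k] V.carrier) (hU : Module.finrank k U.carrier = 1)
    (hf : ∀ s, U.sub s = ⊤ → V.sub s = ⊤) : PHom U V where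
  toLinearMap := f
  maps s x hx := by
    have : IsSimpleModule k U.carrier := isSimpleModule_iff_finrank_eq_one.mpr hU
    rcases eq_bot_or_eq_top (U.sub s) with hs | hs
    · rw [hs, Submodule.mem_bot] at hx
      rw [hx, map_zero]
      exact zero_mem _
    · rw [hf s hs]
      trivial

theorem piso_iff_of_finrank_eq_one (hU : Module.finrank k U.carrier = 1)
    (hV : Module.finrank k V.carrier = 1) :
    PIso U V ↔ ∀ s, U.sub s = ⊤ ↔ V.sub s = ⊤ := by
  refine ⟨PIso.sub_eq_top_iff, fun h => ?_⟩
  obtain ⟨e⟩ := FiniteDimensional.nonempty_linearEquiv_of_finrank_eq (hU.trans hV.symm)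
  refine ⟨.ofFinrankEqOne e.toLinearMap hU fun s => (h s).1,
    .ofFinrankEqOne e.symm.toLinearMap hV fun s => (h s).2, ?_, ?_⟩
  · ext v
    exact e.apply_symm_apply v
  · ext u
    exact e.symm_apply_apply u

theorem finrank_kASp (A : Set S) : Module.finrank k (kASp k A).carrier = 1 :=
  Module.finrank_self k

theorem kASp_sub_eq_top_iff {A : Set S} {s : S} :
    (kASp k A).sub s = ⊤ ↔ s ∈ upperClosure A := by
  rw [mem_upperClosure]
  by_cases h : ∃ a ∈ A, a ≤ s
  · exact iff_of_true (if_pos h) h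
  · refine iff_of_false (fun htop => ?_) h
    exact bot_ne_top (α := Submodule k k) ((if_neg h).symm.trans htop)

theorem piso_kASp_setOf_minimal [WellFoundedLT S] (hV : Module.finrank k V.carrier = 1) :
    PIso V (kASp k {s | Minimal (fun t => V.sub t = ⊤) s}) := by
  refine (piso_iff_of_finrank_eq_one hV (finrank_kASp _)).2 fun s => ?_
  rw [kASp_sub_eq_top_iff, mem_upperClosure]
  constructor
  · intro hs
    obtain ⟨a, has, ha⟩ := exists_minimal_le_of_wellFoundedLT (fun t => V.sub t = ⊤) s hs
    exact ⟨a, ha, has⟩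
  · rintro ⟨a, ha, has⟩
    exact top_le_iff.1 (ha.1 ▸ V.mono has)

theorem eq_of_piso_kASp {A B : Set S} (hA : IsAntichain (· ≤ ·) A) (hB : IsAntichain (· ≤ ·) B)
    (h : PIso (kASp k A) (kASp k B)) : A = B := by
  have hup : upperClosure A = upperClosure B := SetLike.ext fun s => by
    rw [← kASp_sub_eq_top_iff (k := k), ← kASp_sub_eq_top_iff (k := k)]
    exact h.sub_eq_top_iff s
  ext s
  rw [← hA.minimal_mem_upperClosure_iff_mem, ← hB.minimal_mem_upperClosure_iff_mem, hup]

end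

/-- An `S`-space is simple iff its ambient space is one-dimensional, and the
isomorphism classes of simple `S`-spaces are in bijection with the antichains of `S` via
`A ↦ k_A`. -/
theorem stmt15 :
    (∀ V : PSp k S, PSimple V ↔ Module.finrank k V.carrier = 1) ∧
    (∀ A : Set S, IsAntichain (· ≤ ·) A → PSimple (kASp k A)) ∧
    (∀ V : PSp k S, PSimple V → ∃ A : Set S, IsAntichain (· ≤ ·) A ∧ PIso V (kASp k A)) ∧
    (∀ A B : Set S, IsAntichain (· ≤ ·) A → IsAntichain (· ≤ ·) B →
      PIso (kASp k A) (kASp k B) → A = B) :=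
  ⟨fun _ => psimple_iff_finrank_eq_one,
    fun A _ => .of_finrank_eq_one (finrank_kASp A),
    fun _ hV => ⟨_, setOfPred_minimal_antichain _, piso_kASp_setOf_minimal hV.finrank_eq_one⟩,
    fun _ _ => eq_of_piso_kASp⟩
end

section
/- Let S be a finite poset and k a field. Every S-space is semisimple (isomorphic to a direct sum of S-spaces with one-dimensional ambient space) if and only if the width of S is at most 2. -/
variable {k : Type} [Field k] {S : Type} [PartialOrder S] [Fintype S]

/-- The direct sum of a finite family of `S`-spaces. -/
def dSum {n : ℕ} (W : Fin n → PSp k S) : PSp k S where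
  carrier := ∀ i, (W i).carrier
  sub s := Submodule.pi Set.univ fun i => (W i).sub s
  mono := by
    intro s t h x hx i hi
    exact (W i).mono h (hx i hi)

section Chains

variable {α : Type*} [PartialOrder α]

theorem IsChain.exists_isGreatest [WellFoundedGT α] {c : Set α} (hc : IsChain (· ≤ ·) c)
    (hne : c.Nonempty) : ∃ m, IsGreatest c m := by
  obtain ⟨m, hm⟩ := exists_maximal_of_wellFoundedGT (· ∈ c) hne
  exact ⟨m, hm.prop, fun x hx => (hc.total hx hm.prop).elim id (hm.le_of_ge hx)⟩

theorem IsChain.exists_isLeast [WellFoundedLT α] {c : Set α} (hc : IsChain (· ≤ ·) c)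
    (hne : c.Nonempty) : ∃ m, IsLeast c m := by
  obtain ⟨m, hm⟩ := exists_minimal_of_wellFoundedLT (· ∈ c) hne
  exact ⟨m, hm.prop, fun x hx => (hc.total hm.prop hx).elim id (hm.le_of_le hx)⟩

theorem exists_isChain_union_eq_insert {C₁ C₂ : Set α} {a : α} (h₁ : IsChain (· ≤ ·) C₁)
    (h₂ : IsChain (· ≤ ·) C₂) (ha : ∀ x ∈ C₁, ∀ y ∈ C₂, IncompRel (· ≤ ·) x y → x ≤ a) :
    ∃ D₁ D₂ : Set α, IsChain (· ≤ ·) D₁ ∧ IsChain (· ≤ ·) D₂ ∧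
      D₁ ∪ D₂ = insert a (C₁ ∪ C₂) := by
  refine ⟨insert a {x ∈ C₁ | x ≤ a}, C₂ ∪ {x ∈ C₁ | ¬ x ≤ a}, ?_, ?_, ?_⟩
  · exact (h₁.mono (Set.sep_subset _ _)).insert fun x hx _ => Or.inr hx.2
  · refine isChain_union.2 ⟨h₂, h₁.mono (Set.sep_subset _ _), fun y hy x hx _ => ?_⟩
    by_contra hyx
    exact hx.2 (ha x hx.1 y hy ⟨fun h => hyx (Or.inr h), fun h => hyx (Or.inl h)⟩)
  · ext x
    simp only [Set.mem_union, Set.mem_insert_iff, Set.mem_ofPred_eq]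
    tauto

/-- With `exists_isChain_union_eq_insert`, this inserts a maximal element `a` into a cover by two
chains; `hcomp` holds when moreover `insert a (C₁ ∪ C₂)` has width at most two. -/
theorem forall_incompRel_le_or_forall_incompRel_le {C₁ C₂ : Set α} {a : α}
    (h₁ : IsChain (· ≤ ·) C₁) (h₂ : IsChain (· ≤ ·) C₂)
    (hcomp : ∀ x ∈ C₁, ∀ y ∈ C₂, ¬ x ≤ a → ¬ y ≤ a → ¬ IncompRel (· ≤ ·) x y) :
    (∀ x ∈ C₁, ∀ y ∈ C₂, IncompRel (· ≤ ·) x y → x ≤ a) ∨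
      (∀ y ∈ C₂, ∀ x ∈ C₁, IncompRel (· ≤ ·) y x → y ≤ a) := by
  by_contra! h
  obtain ⟨⟨x₁, hx₁, y₁, hy₁, hxy₁, hx₁a⟩, ⟨y₂, hy₂, x₂, hx₂, hxy₂, hy₂a⟩⟩ := h
  rcases not_not.1 (mt not_symmGen_iff.1 (hcomp x₁ hx₁ y₂ hy₂ hx₁a hy₂a)) with hle | hle
  · have hx₁₂ : x₁ ≤ x₂ := (h₁.total hx₁ hx₂).resolve_right fun h => hxy₂.2 (h.trans hle)
    exact hcomp x₂ hx₂ y₂ hy₂ (fun h => hx₁a (hx₁₂.trans h)) hy₂a hxy₂.symm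
  · have hy₂₁ : y₂ ≤ y₁ := (h₂.total hy₂ hy₁).resolve_right fun h => hxy₁.2 (h.trans hle)
    exact hcomp x₁ hx₁ y₁ hy₁ hx₁a (fun h => hy₂a (hy₂₁.trans h)) hxy₁

theorem not_incompRel_of_width_le_two {s : Set α}
    (hw : ∀ A ⊆ s, IsAntichain (· ≤ ·) A → A.ncard ≤ 2) {a b c : α} (ha : a ∈ s) (hb : b ∈ s)
    (hc : c ∈ s) (hab : IncompRel (· ≤ ·) a b) (hac : IncompRel (· ≤ ·) a c) :
    ¬ IncompRel (· ≤ ·) b c := by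
  intro hbc
  have hA : IsAntichain (· ≤ ·) {a, b, c} := by
    simp only [IsAntichain, Set.pairwise_insert, Set.pairwise_singleton, Set.mem_insert_iff,
      Set.mem_singleton_iff, Pi.compl_apply, compl_iff_not]
    grind [IncompRel]
  have := hw {a, b, c} (by grind) hA
  rw [Set.ncard_eq_three.2 ⟨a, b, c, hab.ne, hac.ne, hbc.ne, rfl⟩] at this
  omega

theorem exists_isChain_union_eq_of_width_le_two {s : Set α} (hs : s.Finite)
    (hw : ∀ A ⊆ s, IsAntichain (· ≤ ·) A → A.ncard ≤ 2) :
    ∃ C₁ C₂ : Set α, IsChain (· ≤ ·) C₁ ∧ IsChain (· ≤ ·) C₂ ∧ C₁ ∪ C₂ = s := by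
  induction hn : s.ncard generalizing s with
  | zero => exact ⟨∅, ∅, .empty, .empty, by simp [(Set.ncard_eq_zero hs).1 hn]⟩
  | succ n ih =>
    obtain ⟨a, ha⟩ := hs.exists_maximal (Set.nonempty_of_ncard_ne_zero (by omega))
    obtain ⟨C₁, C₂, h₁, h₂, hC⟩ := ih hs.sdiff (fun A hA => hw A (hA.trans Set.sdiff_subset))
      (by rw [Set.ncard_sdiff_singleton_of_mem ha.prop, hn, Nat.add_sub_cancel])
    have hsub : C₁ ∪ C₂ ⊆ s := hC ▸ Set.sdiff_subset
    have hincomp : ∀ x ∈ C₁ ∪ C₂, ¬ x ≤ a → IncompRel (· ≤ ·) a x := fun x hx hxa =>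
      ⟨fun hax => hxa (ha.le_of_ge (hsub hx) hax), hxa⟩
    have hcomp : ∀ x ∈ C₁, ∀ y ∈ C₂, ¬ x ≤ a → ¬ y ≤ a → ¬ IncompRel (· ≤ ·) x y :=
      fun x hx y hy hxa hya => not_incompRel_of_width_le_two hw ha.prop
        (hsub (Or.inl hx)) (hsub (Or.inr hy))
        (hincomp x (Or.inl hx) hxa) (hincomp y (Or.inr hy) hya)
    rw [← Set.insert_eq_of_mem ha.prop, ← Set.insert_sdiff_singleton, ← hC]
    rcases forall_incompRel_le_or_forall_incompRel_le h₁ h₂ hcomp with h | h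
    · exact exists_isChain_union_eq_insert h₁ h₂ h
    · rw [Set.union_comm]
      exact exists_isChain_union_eq_insert h₂ h₁ h

end Chains

namespace Submodule

open Module

variable {K X : Type*} [DivisionRing K] [AddCommGroup X] [Module K X] [FiniteDimensional K X]

theorem exists_mem_ne_zero_of_isChain {𝓕 : Set (Submodule K X)}
    (h𝓕 : IsChain (· ≤ ·) 𝓕) {p : Submodule K X} (hp : p ≠ ⊥) :
    ∃ v ∈ p, v ≠ 0 ∧ ∀ q ∈ 𝓕, v ∈ q ∨ q ⊓ p = ⊥ := by
  -- adjoining `⊤` keeps `𝓕` a chain and makes the set below nonempty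
  have hchain := (h𝓕.insert fun _ _ _ => Or.inr le_top).mono (Set.sep_subset _ (· ⊓ p ≠ ⊥))
  obtain ⟨q₀, ⟨-, hq₀p⟩, hleast⟩ :=
    hchain.exists_isLeast ⟨⊤, Set.mem_insert _ _, by simpa using hp⟩
  obtain ⟨v, hv, hv0⟩ := exists_mem_ne_zero_of_ne_bot hq₀p
  refine ⟨v, (mem_inf.1 hv).2, hv0, fun q hq => ?_⟩
  by_cases hqp : q ⊓ p = ⊥
  · exact Or.inr hqp
  · exact Or.inl (hleast ⟨Set.mem_insert_of_mem _ hq, hqp⟩ (mem_inf.1 hv).1)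

theorem exists_sup_span_singleton_eq_of_isChain {𝓖 : Set (Submodule K X)}
    (h𝓖 : IsChain (· ≤ ·) 𝓖) {p : Submodule K X} {v : X} (hvp : v ∈ p) (hv0 : v ≠ 0) :
    ∃ H : Submodule K X, v ∉ H ∧ H ⊔ K ∙ v = p ∧ ∀ q ∈ 𝓖, v ∈ q ∨ q ⊓ p ≤ H := by
  have hchain := (h𝓖.insert fun _ _ _ => Or.inl bot_le).mono (Set.sep_subset _ (v ∉ ·))
  obtain ⟨q₁, ⟨-, hvq₁⟩, hgreatest⟩ :=
    hchain.exists_isGreatest ⟨⊥, Set.mem_insert _ _, by simpa using hv0⟩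
  obtain ⟨f, hfv, hf⟩ := exists_dual_map_eq_bot_of_notMem hvq₁ inferInstance
  refine ⟨LinearMap.ker f ⊓ p, fun h => hfv (mem_inf.1 h).1, le_antisymm
    (sup_le inf_le_right ((span_singleton_le_iff_mem _ _).2 hvp)) fun x hx => ?_, fun q hq => ?_⟩
  · rw [mem_sup]
    refine ⟨x - (f x / f v) • v, mem_inf.2 ⟨?_, sub_mem hx (smul_mem _ _ hvp)⟩, (f x / f v) • v,
      mem_span_singleton.2 ⟨_, rfl⟩, sub_add_cancel _ _⟩
    simp [hfv]
  · by_cases hvq : v ∈ q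
    · exact Or.inl hvq
    · have hq : q ≤ LinearMap.ker f :=
        (hgreatest ⟨Set.mem_insert_of_mem _ hq, hvq⟩).trans (LinearMap.le_ker_iff_map.2 hf)
      exact Or.inr (inf_le_inf_right p hq)

theorem exists_linearIndepOn_span_inter_eq_inf (𝓒 : Set (Submodule K X))
    (hsplit : ∀ p : Submodule K X, p ≠ ⊥ → ∃ (v : X) (H : Submodule K X),
      v ∉ H ∧ H ⊔ K ∙ v = p ∧ ∀ q ∈ 𝓒, v ∈ q ∨ q ⊓ p ≤ H)
    (p : Submodule K X) :
    ∃ B : Set X, LinearIndepOn K id B ∧ span K B = p ∧ ∀ q ∈ 𝓒, span K (B ∩ q) = q ⊓ p := by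
  induction hn : finrank K p using Nat.strong_induction_on generalizing p with
  | _ n ih =>
  by_cases hp : p = ⊥
  · subst hp
    exact ⟨∅, linearIndepOn_empty K id, span_empty, fun q _ => by simp⟩
  obtain ⟨v, H, hvH, hHv, hv⟩ := hsplit p hp
  have hvp : K ∙ v ≤ p := hHv ▸ le_sup_right
  have hHp : H < p := lt_of_le_of_ne (hHv ▸ le_sup_left) fun h =>
    hvH (h ▸ (span_singleton_le_iff_mem _ _).1 hvp)
  obtain ⟨B, hB, hBH, hBq⟩ := ih _ (hn ▸ finrank_lt_finrank_of_lt hHp) H rfl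
  refine ⟨insert v B, hB.id_insert (hBH ▸ hvH), by rw [span_insert, hBH, sup_comm, hHv],
    fun q hq => ?_⟩
  by_cases hvq : v ∈ q
  · -- modular law, as `K ∙ v ≤ q`
    rw [Set.insert_inter_of_mem hvq, span_insert, hBq q hq, ← hHv, sup_comm H, inf_comm q,
      ← sup_inf_assoc_of_le _ ((span_singleton_le_iff_mem _ _).2 hvq), inf_comm]
  · rw [Set.insert_inter_of_notMem hvq, hBq q hq]
    exact le_antisymm (inf_le_inf_left q hHp.le)
      (le_inf inf_le_left ((hv q hq).resolve_left hvq))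

theorem exists_linearIndepOn_span_inter_eq_of_isChain {𝓕 𝓖 : Set (Submodule K X)}
    (h𝓕 : IsChain (· ≤ ·) 𝓕) (h𝓖 : IsChain (· ≤ ·) 𝓖) :
    ∃ B : Set X, LinearIndepOn K id B ∧ span K B = ⊤ ∧ ∀ q ∈ 𝓕 ∪ 𝓖, span K (B ∩ q) = q := by
  have hsplit (p : Submodule K X) (hp : p ≠ ⊥) : ∃ (v : X) (H : Submodule K X),
      v ∉ H ∧ H ⊔ K ∙ v = p ∧ ∀ q ∈ 𝓕 ∪ 𝓖, v ∈ q ∨ q ⊓ p ≤ H := by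
    obtain ⟨v, hvp, hv0, hv𝓕⟩ := exists_mem_ne_zero_of_isChain h𝓕 hp
    obtain ⟨H, hvH, hHv, hH𝓖⟩ := exists_sup_span_singleton_eq_of_isChain h𝓖 hvp hv0
    refine ⟨v, H, hvH, hHv, fun q hq => hq.elim (fun hq => ?_) (hH𝓖 q)⟩
    exact (hv𝓕 q hq).imp_right fun h => h.le.trans bot_le
  simpa using exists_linearIndepOn_span_inter_eq_inf _ hsplit ⊤

end Submodule

section

variable {k : Type} [Field k] {S : Type} [PartialOrder S]

namespace PSp

open Module Submodule

def IsSemisimple (V : PSp k S) : Prop :=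
  ∃ (n : ℕ) (W : Fin n → PSp k S), (∀ i, finrank k (W i).carrier = 1) ∧ PIso V (dSum W)

/-- `b` is adapted to `V`: every `V.sub s` is spanned by the vectors of `b` that it contains. -/
def IsAdaptedBasis {ι : Type*} (V : PSp k S) (b : Basis ι k V.carrier) : Prop :=
  ∀ s, ∀ x ∈ V.sub s, ∀ i, b.repr x i ≠ 0 → b i ∈ V.sub s

theorem pIso_iff_exists_linearEquiv {U V : PSp k S} :
    PIso U V ↔ ∃ E : U.carrier ≃ₗ[k] V.carrier, ∀ s x, E x ∈ V.sub s ↔ x ∈ U.sub s := by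
  constructor
  · rintro ⟨f, g, hfg, hgf⟩
    have hfg' : f.toLinearMap ∘ₗ g.toLinearMap = LinearMap.id := congrArg PHom.toLinearMap hfg
    have hgf' : g.toLinearMap ∘ₗ f.toLinearMap = LinearMap.id := congrArg PHom.toLinearMap hgf
    refine ⟨.ofLinearMap f.toLinearMap g.toLinearMap hfg' hgf',
      fun s x => ⟨fun hx => ?_, f.maps s x⟩⟩
    have hx' := g.maps s _ hx
    rwa [LinearEquiv.coe_ofLinearMap, ← LinearMap.comp_apply, hgf', LinearMap.id_apply] at hx'
  · rintro ⟨E, hE⟩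
    refine ⟨⟨E, fun s x => (hE s x).2⟩, ⟨E.symm, fun s y hy => (hE s _).1 (by simpa)⟩, ?_, ?_⟩ <;>
      ext <;> simp [PHom.comp, PHom.id]

theorem mem_kASp_sub {A : Set S} {s : S} {c : k} :
    c ∈ (kASp k A).sub s ↔ c = 0 ∨ ∃ a ∈ A, a ≤ s := by
  simp only [kASp]
  split_ifs with h
  · exact iff_of_true trivial (Or.inr h)
  · exact (mem_bot k).trans (or_iff_left h).symm

theorem isSemisimple_of_isAdaptedBasis_fin {n : ℕ} {V : PSp k S} (b : Basis (Fin n) k V.carrier)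
    (hb : V.IsAdaptedBasis b) : V.IsSemisimple := by
  have hW (i : Fin n) (s : S) (c : k) :
      c ∈ (kASp k {t | b i ∈ V.sub t}).sub s ↔ c = 0 ∨ b i ∈ V.sub s := by
    rw [mem_kASp_sub]
    exact or_congr_right ⟨fun ⟨t, ht, hts⟩ => V.mono hts ht, fun h => ⟨s, h, le_rfl⟩⟩
  -- the summand spanned by `b i` is `k_A` for the up-set `A` of the `s` with `b i ∈ V.sub s`
  let W (i : Fin n) := kASp k {t | b i ∈ V.sub t}
  let E : V.carrier ≃ₗ[k] (dSum W).carrier := b.equivFun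
  refine ⟨n, W, fun _ => finrank_self k,
    pIso_iff_exists_linearEquiv.2 ⟨E, fun s x => ⟨fun hx => ?_, fun hx i _ => ?_⟩⟩⟩
  · rw [← b.sum_repr x]
    refine sum_mem fun i _ => ?_
    rcases (hW i s (b.repr x i)).1 (hx i trivial) with h | h
    · simp [h]
    · exact smul_mem _ _ h
  · refine (hW i s (b.repr x i)).2 ?_
    by_cases h : b.repr x i = 0
    · exact Or.inl h
    · exact Or.inr (hb s x hx i h)

theorem isSemisimple_of_isAdaptedBasis {ι : Type*} {V : PSp k S} (b : Basis ι k V.carrier)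
    (hb : V.IsAdaptedBasis b) : V.IsSemisimple := by
  have : Finite ι := Module.Finite.finite_basis b
  refine isSemisimple_of_isAdaptedBasis_fin (b.reindex (Finite.equivFin ι)) fun s x hx i hi => ?_
  simp only [Basis.reindex_apply, Basis.repr_reindex_apply] at hi ⊢
  exact hb s x hx _ hi

theorem isAdaptedBasis_of_le_span {ι : Type*} {V : PSp k S} (b : Basis ι k V.carrier)
    (h : ∀ s, V.sub s ≤ span k (b '' {i | b i ∈ V.sub s})) : V.IsAdaptedBasis b :=
  fun s _ hx _ hi => (b.mem_span_image.1 (h s hx)) (Finsupp.mem_support_iff.2 hi)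

theorem IsSemisimple.exists_isAdaptedBasis {V : PSp k S} (hV : V.IsSemisimple) :
    ∃ (ι : Type) (b : Basis ι k V.carrier), V.IsAdaptedBasis b := by
  obtain ⟨n, W, hW, hVW⟩ := hV
  obtain ⟨E, hE⟩ := pIso_iff_exists_linearEquiv.1 hVW
  let w (i : Fin n) : Basis (Fin 1) k (W i).carrier := finBasisOfFinrankEq k _ (hW i)
  let B : Basis (Σ _ : Fin n, Fin 1) k (dSum W).carrier := Pi.basis w
  have hB : ∀ i j, B ⟨i, j⟩ = Pi.single i (w i j) := fun i j => Pi.basis_apply w ⟨i, j⟩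
  refine ⟨Σ _ : Fin n, Fin 1, B.map E.symm, fun s x hx ⟨i, j⟩ hij => ?_⟩
  have hrepr : (B.map E.symm).repr x ⟨i, j⟩ = (w i).repr (E x i) j := Pi.basis_repr w (E x) ⟨i, j⟩
  have hxi : E x i ≠ 0 := fun h => hij (by rw [hrepr, h, map_zero, Finsupp.zero_apply])
  have htop : (W i).sub s = ⊤ := by
    have := isSimpleModule_iff_finrank_eq_one.2 (hW i)
    exact (eq_bot_or_eq_top _).resolve_left
      fun h => hxi ((mem_bot k).1 (h ▸ (hE s x).2 hx i trivial))
  rw [← hE, Basis.map_apply, LinearEquiv.apply_symm_apply, hB]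
  intro i' _
  by_cases hi : i' = i
  · subst hi
    simp [htop]
  · simp [hi]

theorem IsAdaptedBasis.card_le_finrank {ι κ : Type*} {V : PSp k S} {b : Basis ι k V.carrier}
    (hb : V.IsAdaptedBasis b) (p : κ → S)
    (hdisj : Pairwise fun j j' => Disjoint (V.sub (p j)) (V.sub (p j')))
    (hne : ∀ j, V.sub (p j) ≠ ⊥) : Nat.card κ ≤ finrank k V.carrier := by
  have hmem (j : κ) : ∃ i, b i ∈ V.sub (p j) := by
    obtain ⟨x, hx, hx0⟩ := exists_mem_ne_zero_of_ne_bot (hne j)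
    obtain ⟨i, hi⟩ := Finsupp.ne_iff.1 (b.repr.map_ne_zero_iff.2 hx0)
    exact ⟨i, hb _ x hx i hi⟩
  choose f hf using hmem
  have : Finite ι := Module.Finite.finite_basis b
  rw [finrank_eq_nat_card_basis b]
  refine Nat.card_le_card_of_injective f fun j j' hjj' => by_contra fun hne => b.ne_zero (f j) ?_
  exact (disjoint_iff_inf_le.1 (hdisj hne)) ⟨hf j, hjj' ▸ hf j'⟩

variable (k) in
def ofVectors {ι X : Type} [AddCommGroup X] [Module k X] [FiniteDimensional k X] (p : ι → S)
    (v : ι → X) : PSp k S where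
  carrier := X
  sub s := span k (v '' {i | p i ≤ s})
  mono h := span_mono (Set.image_mono fun _ hi => le_trans hi h)

theorem ofVectors_sub_apply {ι X : Type} [AddCommGroup X] [Module k X] [FiniteDimensional k X]
    {p : ι → S} (hp : ∀ i j, p i ≤ p j → i = j) (v : ι → X) (j : ι) :
    (ofVectors k p v).sub (p j) = k ∙ v j := by
  have : {i | p i ≤ p j} = {j} := Set.ext fun i => ⟨hp i j, fun h => h ▸ le_rfl⟩
  change span k (v '' _) = _
  rw [this, Set.image_singleton]

theorem not_isSemisimple_ofVectors {κ X : Type} [AddCommGroup X] [Module k X]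
    [FiniteDimensional k X] {p : κ → S} (hp : ∀ i j, p i ≤ p j → i = j) {v : κ → X}
    (hv : Pairwise fun i j => Disjoint (k ∙ v i) (k ∙ v j)) (hv0 : ∀ i, v i ≠ 0)
    (hcard : finrank k X < Nat.card κ) : ¬ (ofVectors k p v).IsSemisimple := fun hV => by
  obtain ⟨ι, b, hb⟩ := hV.exists_isAdaptedBasis
  refine hcard.not_ge (hb.card_le_finrank p (fun i j hij => ?_) fun j => ?_) <;>
    simp only [ofVectors_sub_apply hp]
  · exact hv hij
  · exact (span_singleton_eq_bot.not).2 (hv0 j)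

end PSp

end

open Module Submodule in
theorem PSp.isSemisimple_of_width_le_two (hw : ∀ A : Set S, IsAntichain (· ≤ ·) A → A.ncard ≤ 2)
    (V : PSp k S) : V.IsSemisimple := by
  obtain ⟨C₁, C₂, h₁, h₂, hC⟩ :=
    exists_isChain_union_eq_of_width_le_two Set.finite_univ fun A _ hA => hw A hA
  have hV : Monotone V.sub := fun _ _ h => V.mono h
  obtain ⟨B, hB, hspan, hBq⟩ :=
    exists_linearIndepOn_span_inter_eq_of_isChain (hV.isChain_image h₁) (hV.isChain_image h₂)
  let b := Basis.mk hB (by simpa using hspan.ge)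
  refine isSemisimple_of_isAdaptedBasis b (isAdaptedBasis_of_le_span b fun s => ?_)
  have hs : V.sub s ∈ V.sub '' C₁ ∪ V.sub '' C₂ := by
    rw [← Set.image_union, hC]
    exact Set.mem_image_of_mem _ trivial
  have hb : b '' {i | b i ∈ V.sub s} = B ∩ V.sub s := by
    simp only [b, Basis.coe_mk, id_eq]
    exact Subtype.image_preimage_coe _ _
  rw [hb, hBq _ hs]

open Module Submodule in
theorem PSp.width_le_two_of_forall_isSemisimple (h : ∀ V : PSp k S, V.IsSemisimple) (A : Set S)
    (hA : IsAntichain (· ≤ ·) A) : A.ncard ≤ 2 := by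
  by_contra! hA3
  obtain ⟨a, b, c, ha, hb, hc, hab, hac, hbc⟩ := (Set.two_lt_ncard_iff A.toFinite).1 hA3
  have hp : ∀ i j, ![a, b, c] i ≤ ![a, b, c] j → i = j := by
    intro i j hij
    have hmem : ∀ i, ![a, b, c] i ∈ A := by simp [Fin.forall_fin_succ, ha, hb, hc]
    have := hA.eq (hmem i) (hmem j) hij
    fin_cases i <;> fin_cases j <;> simp_all
  refine not_isSemisimple_ofVectors hp (v := ![((1 : k), (0 : k)), (0, 1), (1, 1)]) ?_ ?_ ?_ (h _)
  · intro i j hij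
    fin_cases i <;> fin_cases j <;> simp_all [disjoint_span_singleton', mem_span_singleton]
  · intro i
    fin_cases i <;> simp
  · simp

/-- Every `S`-space is semisimple (a direct sum of `S`-spaces with
one-dimensional ambient space) iff the width of `S` is at most `2`. -/
theorem stmt16 :
    (∀ V : PSp k S, ∃ (n : ℕ) (W : Fin n → PSp k S),
      (∀ i, Module.finrank k (W i).carrier = 1) ∧ PIso V (dSum W)) ↔
    (∀ A : Set S, IsAntichain (· ≤ ·) A → A.ncard ≤ 2) :=
  ⟨PSp.width_le_two_of_forall_isSemisimple, PSp.isSemisimple_of_width_le_two⟩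
end

section
/- Let S be a finite poset and let A, B be antichains of S. For the simple S-spaces k_A and k_B (with ambient space k and subspaces k at s iff some element of the antichain is ≤ s), the space Hom_{S-spaces}(k_A, k_B) equals k if B ≤ A in the antichain order (for every a ∈ A there exists b ∈ B with b ≤ a), and equals 0 otherwise. -/
variable {k : Type} [Field k] {S : Type} [PartialOrder S] [Fintype S]

namespace kASp

variable {k : Type} [Field k] {S : Type} [PartialOrder S] {A B : Set S} {s : S}

theorem sub_eq_top {a : S} (ha : a ∈ A) (has : a ≤ s) : (kASp k A).sub s = ⊤ :=
  if_pos ⟨a, ha, has⟩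

theorem sub_eq_bot (h : ¬ ∃ a ∈ A, a ≤ s) : (kASp k A).sub s = ⊥ :=
  if_neg h

theorem hom_ext {V : PSp k S} {f g : PHom (kASp k A) V}
    (h : f.toLinearMap (1 : k) = g.toLinearMap (1 : k)) : f = g :=
  PHom.ext (LinearMap.ext_ring h)

def homOfLE (hBA : ∀ a ∈ A, ∃ b ∈ B, b ≤ a)
    (φ : (kASp k A).carrier →ₗ[k] (kASp k B).carrier) : PHom (kASp k A) (kASp k B) where
  toLinearMap := φ
  maps s x hx := by
    by_cases hs : ∃ a ∈ A, a ≤ s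
    · obtain ⟨a, ha, has⟩ := hs
      obtain ⟨b, hb, hba⟩ := hBA a ha
      rw [sub_eq_top hb (hba.trans has)]
      trivial
    · rw [sub_eq_bot hs] at hx
      rw [(Submodule.mem_bot k).1 hx, map_zero]
      exact zero_mem _

theorem hom_eq_zero {a : S} (ha : a ∈ A) (hB : ∀ b ∈ B, ¬ b ≤ a) (f : PHom (kASp k A) (kASp k B)) :
    f.toLinearMap = 0 := by
  have h1 : f.toLinearMap (1 : k) ∈ (kASp k B).sub a :=
    f.maps a (1 : k) (by rw [sub_eq_top ha le_rfl]; trivial)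
  rw [sub_eq_bot (fun ⟨b, hb, hba⟩ => hB b hb hba), Submodule.mem_bot] at h1
  exact LinearMap.ext_ring h1

end kASp

theorem stmt18_general (A B : Set S) :
    ((∀ a ∈ A, ∃ b ∈ B, b ≤ a) →
      Function.Bijective (fun f : PHom (kASp k A) (kASp k B) => f.toLinearMap (1 : k))) ∧
    (¬ (∀ a ∈ A, ∃ b ∈ B, b ≤ a) →
      ∀ f : PHom (kASp k A) (kASp k B), f.toLinearMap = 0) := by
  refine ⟨fun hBA => ⟨fun f g hfg => kASp.hom_ext hfg, fun c => ?_⟩, fun hBA => ?_⟩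
  · exact ⟨kASp.homOfLE hBA (LinearMap.toSpanSingleton k k c), one_smul k c⟩
  · push Not at hBA
    obtain ⟨a, ha, hB⟩ := hBA
    exact kASp.hom_eq_zero ha hB

/-- For antichains `A, B` of `S`, `Hom(k_A, k_B)` equals `k` (via `f ↦ f(1)`)
if `B ≤ A` in the antichain order (every `a ∈ A` lies above some `b ∈ B`), and equals `0`
otherwise. -/
theorem stmt18 (A B : Set S) (hA : IsAntichain (· ≤ ·) A) (hB : IsAntichain (· ≤ ·) B) :
    ((∀ a ∈ A, ∃ b ∈ B, b ≤ a) →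
      Function.Bijective (fun f : PHom (kASp k A) (kASp k B) => f.toLinearMap (1 : k))) ∧
    (¬ (∀ a ∈ A, ∃ b ∈ B, b ≤ a) →
      ∀ f : PHom (kASp k A) (kASp k B), f.toLinearMap = 0) :=
  stmt18_general A B
end
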